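/- Let μ ≥ 0, L > 0, let h : V → ℝ be convex, differentiable with L-Lipschitz gradient, let g : V → ℝ be convex, and set f = h + g; assume f is μ-convex in the subgradient sense and has global minimizer x*. Let γ₀ > 0, x₀, v₀ ∈ V, and suppose sequences (x_k, v_k, γ_k) and (p_{k+1}) satisfy: α_k = √(γ_k/(4L)), β_k = 1/(2Lα_k), p_{k+1} is a subgradient of g at x_{k+1}, (x_{k+1} - x_k)/α_k = v_k - x_{k+1} - β_k(∇h(x_k) + p_{k+1}), (v_{k+1} - v_k)/α_k = (μ/γ_k)(x_{k+1} - v_{k+1}) - (1/γ_k)(∇h(x_{k+1}) + p_{k+1}), (γ_{k+1} - γ_k)/α_k = μ - γ_{k+1}. Define λ₀ = 1, λ_k = ∏_{i=0}^{k-1} 1/(1+α_i), L_k = f(x_k) - f(x*) + (γ_k/2)‖v_k - x*‖², and q_{k+1} = ∇h(x_{k+1}) + p_{k+1}. Then for every k ≥ 0, L_k + (1/(4L))·∑_{i=0}^{k-1} (λ_k/λ_i)‖q_{i+1}‖² ≤ λ_k·L₀. -/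

import Mathlib

/-!
Along the scheme, the Lyapunov function `L_k = f(x_k) - f(x*) + (γ_k/2)‖v_k - x*‖²` satisfies
the one-step contraction `(1 + α_k) L_{k+1} + (1/(4L))‖q_{k+1}‖² ≤ L_k`, which unrolls to the claim.
The contraction combines three inequalities: the cocoercivity bound
`h(x) ≥ h(y) + ⟪∇h(y), x - y⟫ + (1/(2L))‖∇h(x) - ∇h(y)‖²` of a convex function with `L`-Lipschitz
gradient, the `μ`-convexity of `f` at the subgradient `q_{k+1}` of `f` at `x_{k+1}`, and Young's
inequality; the choice `α_k² = γ_k/(4L)`, `α_k β_k = 1/(2L)` makes the leftover terms a negative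
multiple of `‖q_{k+1} + 2(∇h(x_k) - ∇h(x_{k+1}))‖²`.
-/

open scoped RealInnerProductSpace
open Finset

section FirstOrder

variable {E : Type*} [NormedAddCommGroup E] [NormedSpace ℝ E]

theorem HasFDerivAt.hasDerivAt_add_smul {f : E → ℝ} {f' : E →L[ℝ] ℝ} {x d : E} {t : ℝ}
    (hf : HasFDerivAt f f' (x + t • d)) :
    HasDerivAt (fun s : ℝ => f (x + s • d)) (f' d) t :=
  hf.comp_hasDerivAt t (((hasDerivAt_id t).smul_const d).const_add x |>.congr_deriv (one_smul ℝ d))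

theorem ConvexOn.add_le_of_hasFDerivAt {f : E → ℝ} {f' : E →L[ℝ] ℝ} {z : E}
    (hconv : ConvexOn ℝ Set.univ f) (hf : HasFDerivAt f f' z) (u : E) :
    f z + f' (u - z) ≤ f u := by
  have hline : ConvexOn ℝ Set.univ fun t : ℝ => f (z + t • (u - z)) := by
    have heq : (fun t : ℝ => f (z + t • (u - z))) = f ∘ AffineMap.lineMap z u := by
      ext t; simp [AffineMap.lineMap_apply, add_comm]
    simpa [heq] using hconv.comp_affineMap (AffineMap.lineMap z u)
  have hslope := hline.le_slope_of_hasDerivAt (Set.mem_univ 0) (Set.mem_univ 1) zero_lt_one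
    (HasFDerivAt.hasDerivAt_add_smul (by simpa using hf))
  simp only [slope_def_field, one_smul, add_sub_cancel, zero_smul, add_zero, sub_zero,
    div_one] at hslope
  linarith

end FirstOrder

section LipschitzGradient

variable {V : Type*} [NormedAddCommGroup V] [InnerProductSpace ℝ V] [CompleteSpace V]
  {h : V → ℝ} {h' : V → V} {L : ℝ}

theorem le_add_inner_add_sq_of_lipschitz_gradient (hdiff : ∀ z, HasGradientAt h (h' z) z)
    (hlip : ∀ z w, ‖h' z - h' w‖ ≤ L * ‖z - w‖) (x y : V) :
    h y ≤ h x + ⟪h' x, y - x⟫ + L / 2 * ‖y - x‖ ^ 2 := by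
  set d := y - x
  have hline : ∀ t : ℝ, HasDerivAt (fun s : ℝ => h (x + s • d)) ⟪h' (x + t • d), d⟫ t :=
    fun t => by simpa using (hdiff (x + t • d)).hasFDerivAt.hasDerivAt_add_smul
  have hbound : ∀ t ∈ Set.Ico (0 : ℝ) 1, ⟪h' (x + t • d), d⟫ ≤ ⟪h' x, d⟫ + L * t * ‖d‖ ^ 2 := by
    rintro t ⟨ht, -⟩
    have hinc : ⟪h' (x + t • d) - h' x, d⟫ ≤ L * t * ‖d‖ ^ 2 :=
      calc ⟪h' (x + t • d) - h' x, d⟫ ≤ ‖h' (x + t • d) - h' x‖ * ‖d‖ := real_inner_le_norm _ _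
        _ ≤ L * ‖t • d‖ * ‖d‖ := by
          gcongr
          simpa using hlip (x + t • d) x
        _ = L * t * ‖d‖ ^ 2 := by rw [norm_smul, Real.norm_of_nonneg ht]; ring
    rw [inner_sub_left] at hinc
    linarith
  have := image_le_of_deriv_right_le_deriv_boundary (a := 0) (b := 1)
    (B := fun s => h x + s * ⟪h' x, d⟫ + L / 2 * s ^ 2 * ‖d‖ ^ 2)
    (fun t _ => (hline t).continuousAt.continuousWithinAt) (fun t _ => (hline t).hasDerivWithinAt)
    (by simp) (by fun_prop)
    (fun t _ => ((((hasDerivAt_id t).mul_const _).const_add _).add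
      (((hasDerivAt_pow 2 t).const_mul (L / 2)).mul_const _)).hasDerivWithinAt)
    (fun t ht => by linarith [hbound t ht]) (Set.right_mem_Icc.2 zero_le_one)
  simpa [d] using this

/-- Cocoercivity: take one gradient step from `w` on `u ↦ h u - ⟪h' z, u⟫`, which is minimal at `z`. -/
theorem ConvexOn.sq_norm_sub_gradient_le (hL : 0 < L) (hconv : ConvexOn ℝ Set.univ h)
    (hdiff : ∀ z, HasGradientAt h (h' z) z) (hlip : ∀ z w, ‖h' z - h' w‖ ≤ L * ‖z - w‖)
    (z w : V) :
    1 / (2 * L) * ‖h' w - h' z‖ ^ 2 ≤ h w - h z - ⟪h' z, w - z⟫ := by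
  set φ : V → ℝ := fun u => h u - ⟪h' z, u⟫
  set y := w - L⁻¹ • (h' w - h' z)
  have hφ : ∀ u, HasGradientAt φ (h' u - h' z) u := fun u => by
    rw [hasGradientAt_iff_hasFDerivAt, map_sub]
    exact (hdiff u).hasFDerivAt.sub (InnerProductSpace.toDual ℝ V (h' z)).hasFDerivAt
  have hφlip : ∀ a b, ‖(h' a - h' z) - (h' b - h' z)‖ ≤ L * ‖a - b‖ := fun a b => by
    simpa using hlip a b
  have hmin : φ z ≤ φ y := by
    have := hconv.add_le_of_hasFDerivAt (hdiff z).hasFDerivAt y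
    simp only [φ, InnerProductSpace.toDual_apply_apply, inner_sub_right] at this ⊢
    linarith
  have hdesc := le_add_inner_add_sq_of_lipschitz_gradient hφ hφlip w y
  rw [sub_sub_cancel_left, inner_neg_right, real_inner_smul_right, real_inner_self_eq_norm_sq,
    norm_neg, norm_smul, Real.norm_of_nonneg (inv_nonneg.2 hL.le)] at hdesc
  have hφw : φ w - φ z = h w - h z - ⟪h' z, w - z⟫ := by simp only [φ, inner_sub_right]; ring
  have hgain : L⁻¹ * ‖h' w - h' z‖ ^ 2 - L / 2 * (L⁻¹ * ‖h' w - h' z‖) ^ 2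
      = 1 / (2 * L) * ‖h' w - h' z‖ ^ 2 := by
    field_simp
    ring
  linarith

end LipschitzGradient

section Step

variable {V : Type*} [NormedAddCommGroup V] [InnerProductSpace ℝ V]

theorem real_inner_le_mul_sq_add_inv_mul_sq {c : ℝ} (hc : 0 < c) (u w : V) :
    ⟪u, w⟫ ≤ c / 2 * ‖w‖ ^ 2 + 1 / (2 * c) * ‖u‖ ^ 2 := by
  have hgap : c / 2 * ‖w‖ ^ 2 + 1 / (2 * c) * ‖u‖ ^ 2 - ⟪u, w⟫ = ‖c • w - u‖ ^ 2 / (2 * c) := by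
    rw [norm_sub_sq_real, real_inner_smul_left, norm_smul, Real.norm_of_nonneg hc.le,
      real_inner_comm]
    field_simp
    ring
  linarith [div_nonneg (sq_nonneg ‖c • w - u‖) (by positivity : (0 : ℝ) ≤ 2 * c)]

noncomputable def hnagLyapunov (f : V → ℝ) (xstar : V) (γ : ℝ) (x v : V) : ℝ :=
  f x - f xstar + γ / 2 * ‖v - xstar‖ ^ 2

theorem hnag_v_update_identity {μ a γ γ' : ℝ} {v v' x' xstar q : V} (ha : a ≠ 0) (hγ : γ ≠ 0)
    (hv : a⁻¹ • (v' - v) = (μ / γ) • (x' - v') - (1 / γ) • q)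
    (hγ' : (1 + a) * γ' = γ + a * μ) :
    (1 + a) * (γ' / 2 * ‖v' - xstar‖ ^ 2) - γ / 2 * ‖v - xstar‖ ^ 2
      = a * μ / 2 * ‖xstar - x'‖ ^ 2 - a * μ / 2 * ‖x' - v'‖ ^ 2
        - a * ⟪q, v' - xstar⟫ - γ / 2 * ‖v' - v‖ ^ 2 := by
  have hv' : γ • (v' - v) = (a * μ) • (x' - v') - a • q := by
    calc γ • (v' - v) = (γ * a) • (a⁻¹ • (v' - v)) := by
          rw [smul_smul, mul_assoc, mul_inv_cancel₀ ha, mul_one]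
      _ = (a * μ) • (x' - v') - a • q := by
          rw [hv, smul_sub, smul_smul, smul_smul]
          congr 2 <;> field_simp
  have hvx : ‖v - xstar‖ ^ 2
      = ‖v' - xstar‖ ^ 2 - 2 * ⟪v' - v, v' - xstar⟫ + ‖v' - v‖ ^ 2 := by
    rw [show v - xstar = (v' - xstar) - (v' - v) by abel, norm_sub_sq_real, real_inner_comm]
  have hxx : ‖xstar - x'‖ ^ 2
      = ‖x' - v'‖ ^ 2 + 2 * ⟪x' - v', v' - xstar⟫ + ‖v' - xstar‖ ^ 2 := by
    rw [norm_sub_rev, ← sub_add_sub_cancel x' v' xstar, norm_add_sq_real]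
  have hinner : γ * ⟪v' - v, v' - xstar⟫
      = a * μ * ⟪x' - v', v' - xstar⟫ - a * ⟪q, v' - xstar⟫ := by
    rw [← real_inner_smul_left, hv', inner_sub_left, real_inner_smul_left, real_inner_smul_left]
  linear_combination (‖v' - xstar‖ ^ 2 / 2) * hγ' - (γ / 2) * hvx + hinner - (a * μ / 2) * hxx

theorem hnagLyapunov_step {f : V → ℝ} {μ L a β γ γ' : ℝ} {x x' v v' xstar q s : V}
    (hμ : 0 ≤ μ) (hL : 0 < L) (hγ : 0 < γ)
    (ha : a = √(γ / (4 * L))) (hβ : β = 1 / (2 * L * a))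
    (hx : a⁻¹ • (x' - x) = v - x' - β • s)
    (hv : a⁻¹ • (v' - v) = (μ / γ) • (x' - v') - (1 / γ) • q)
    (hγ' : (γ' - γ) / a = μ - γ')
    (hcoco : f x' + ⟪q, x - x'⟫ + 1 / (2 * L) * ‖s - q‖ ^ 2 ≤ f x)
    (hstrong : f xstar - f x' - ⟪q, xstar - x'⟫ ≥ μ / 2 * ‖xstar - x'‖ ^ 2) :
    (1 + a) * hnagLyapunov f xstar γ' x' v' + 1 / (4 * L) * ‖q‖ ^ 2
      ≤ hnagLyapunov f xstar γ x v := by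
  have ha0 : 0 < a := ha ▸ Real.sqrt_pos.2 (by positivity)
  have ha2 : a ^ 2 = γ / (4 * L) := ha ▸ Real.sq_sqrt (by positivity)
  have hγ'' : (1 + a) * γ' = γ + a * μ := by
    rw [div_eq_iff ha0.ne'] at hγ'
    linear_combination hγ'
  have hxq : ⟪q, x' - x⟫ = a * ⟪q, v - x'⟫ - 1 / (2 * L) * ⟪q, s⟫ := by
    rw [← smul_inv_smul₀ ha0.ne' (x' - x), hx, real_inner_smul_right, inner_sub_right,
      real_inner_smul_right, hβ]
    field_simp
  have hvq := hnag_v_update_identity (xstar := xstar) ha0.ne' hγ.ne' hv hγ''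
  have hyoung : a * ⟪q, v - v'⟫ ≤ γ / 2 * ‖v' - v‖ ^ 2 + 1 / (8 * L) * ‖q‖ ^ 2 := by
    have := real_inner_le_mul_sq_add_inv_mul_sq hγ (a • q) (v - v')
    rw [real_inner_smul_left, norm_smul, mul_pow, Real.norm_eq_abs, sq_abs, ha2, norm_sub_rev] at this
    convert this using 2
    field_simp
    ring
  have hsq : 0 ≤ ‖q‖ ^ 2 + 4 * ⟪q, s - q⟫ + 4 * ‖s - q‖ ^ 2 := by
    have h := sq_nonneg ‖q + (2 : ℝ) • (s - q)‖
    rw [norm_add_sq_real, real_inner_smul_right, norm_smul, Real.norm_two] at h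
    linarith
  have hdrop : 0 ≤ a * μ / 2 * ‖x' - v'‖ ^ 2 := by positivity
  have hstrong' := mul_le_mul_of_nonneg_left hstrong ha0.le
  simp only [hnagLyapunov, inner_sub_right, real_inner_self_eq_norm_sq]
    at hcoco hstrong' hvq hxq hyoung hsq ⊢
  linear_combination hcoco + hstrong' + hvq + hxq + hyoung + 1 / (8 * L) * hsq + hdrop

end Step

theorem le_prod_inv_mul_of_step {E c α lam : ℕ → ℝ} (hα : ∀ n, 0 ≤ α n)
    (hlam : ∀ k, lam k = ∏ i ∈ range k, (1 + α i)⁻¹)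
    (hstep : ∀ n, (1 + α n) * E (n + 1) + c n ≤ E n) (k : ℕ) :
    E k + ∑ i ∈ range k, lam k / lam i * c i ≤ lam k * E 0 := by
  have hlam_pos : ∀ n, 0 < lam n := fun n => hlam n ▸ prod_pos fun i _ => by
    have := hα i; positivity
  induction k with
  | zero => simp [hlam 0]
  | succ n ih =>
    have hα1 : 0 < 1 + α n := by linarith [hα n]
    have hlam_succ : lam (n + 1) = (1 + α n)⁻¹ * lam n := by
      rw [hlam, hlam, prod_range_succ, mul_comm]
    have hsum : ∑ i ∈ range (n + 1), lam (n + 1) / lam i * c i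
        = (1 + α n)⁻¹ * (∑ i ∈ range n, lam n / lam i * c i + c n) := by
      rw [sum_range_succ, mul_add, mul_sum, hlam_succ, mul_div_assoc,
        div_self (hlam_pos n).ne', mul_one]
      simp only [mul_div_assoc, mul_assoc]
    calc E (n + 1) + ∑ i ∈ range (n + 1), lam (n + 1) / lam i * c i
        = (1 + α n)⁻¹ * ((1 + α n) * E (n + 1) + c n + ∑ i ∈ range n, lam n / lam i * c i) := by
          rw [hsum]; field_simp; ring
      _ ≤ (1 + α n)⁻¹ * (E n + ∑ i ∈ range n, lam n / lam i * c i) := by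
          gcongr; exact hstep n
      _ ≤ (1 + α n)⁻¹ * (lam n * E 0) := by gcongr
      _ = lam (n + 1) * E 0 := by rw [hlam_succ, mul_assoc]

theorem hnag_gamma_pos {μ L : ℝ} {γ α : ℕ → ℝ} (hμ : 0 ≤ μ) (hL : 0 < L) (hγ0 : 0 < γ 0)
    (hα : ∀ n, α n = √(γ n / (4 * L))) (hγ : ∀ n, (γ (n + 1) - γ n) / α n = μ - γ (n + 1)) :
    ∀ n, 0 < γ n
  | 0 => hγ0
  | n + 1 => by
    have hγn := hnag_gamma_pos hμ hL hγ0 hα hγ n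
    have hαn : 0 < α n := hα n ▸ Real.sqrt_pos.2 (by positivity)
    have hrec := hγ n
    rw [div_eq_iff hαn.ne'] at hrec
    nlinarith [mul_nonneg hαn.le hμ]

theorem splitting_hnag_subgradient_control_general
    {V : Type*} [NormedAddCommGroup V] [InnerProductSpace ℝ V] [CompleteSpace V]
    (μ L : ℝ) (hμ : 0 ≤ μ) (hL : 0 < L)
    (h g f : V → ℝ) (h' : V → V)
    (hconvh : ConvexOn ℝ Set.univ h)
    (hdiffh : ∀ z, HasGradientAt h (h' z) z)
    (hlip : ∀ z w : V, ‖h' z - h' w‖ ≤ L * ‖z - w‖)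
    (hf : ∀ z, f z = h z + g z)
    (hfconv : ∀ z w q : V, (∀ u, f u ≥ f w + ⟪q, u - w⟫) →
      f z - f w - ⟪q, z - w⟫ ≥ μ / 2 * ‖z - w‖ ^ 2)
    (xstar : V)
    (x v p : ℕ → V) (γ α β lam : ℕ → ℝ) (hγ0 : 0 < γ 0)
    (hαdef : ∀ k, α k = Real.sqrt (γ k / (4 * L)))
    (hβ : ∀ k, β k = 1 / (2 * L * α k))
    (hp : ∀ k, ∀ u, g u ≥ g (x (k + 1)) + ⟪p (k + 1), u - x (k + 1)⟫)
    (h1 : ∀ k, (α k)⁻¹ • (x (k + 1) - x k)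
        = v k - x (k + 1) - β k • (h' (x k) + p (k + 1)))
    (h2 : ∀ k, (α k)⁻¹ • (v (k + 1) - v k)
        = (μ / γ k) • (x (k + 1) - v (k + 1))
          - (1 / γ k) • (h' (x (k + 1)) + p (k + 1)))
    (h3 : ∀ k, (γ (k + 1) - γ k) / α k = μ - γ (k + 1))
    (hlam : ∀ k, lam k = ∏ i ∈ Finset.range k, (1 + α i)⁻¹)
    (k : ℕ) :
    (f (x k) - f xstar + γ k / 2 * ‖v k - xstar‖ ^ 2)
        + 1 / (4 * L) * ∑ i ∈ Finset.range k,
            (lam k / lam i) * ‖h' (x (i + 1)) + p (i + 1)‖ ^ 2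
      ≤ lam k * (f (x 0) - f xstar + γ 0 / 2 * ‖v 0 - xstar‖ ^ 2) := by
  have hγ := hnag_gamma_pos hμ hL hγ0 hαdef h3
  have hsubgrad : ∀ n u, f u ≥ f (x (n + 1)) + ⟪h' (x (n + 1)) + p (n + 1), u - x (n + 1)⟫ := by
    intro n u
    have hh := hconvh.add_le_of_hasFDerivAt (hdiffh (x (n + 1))).hasFDerivAt u
    rw [InnerProductSpace.toDual_apply_apply] at hh
    rw [hf, hf, inner_add_left]
    linarith [hp n u]
  have hstep : ∀ n, (1 + α n) * hnagLyapunov f xstar (γ (n + 1)) (x (n + 1)) (v (n + 1))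
      + 1 / (4 * L) * ‖h' (x (n + 1)) + p (n + 1)‖ ^ 2
      ≤ hnagLyapunov f xstar (γ n) (x n) (v n) := by
    intro n
    refine hnagLyapunov_step hμ hL (hγ n) (hαdef n) (hβ n) (h1 n) (h2 n) (h3 n) ?_
      (hfconv _ _ _ (hsubgrad n))
    have hcoco := hconvh.sq_norm_sub_gradient_le hL hdiffh hlip (x (n + 1)) (x n)
    rw [hf, hf, inner_add_left, add_sub_add_right_eq_sub]
    linarith [hp n (x n)]
  have hunrolled := le_prod_inv_mul_of_step
    (E := fun n => hnagLyapunov f xstar (γ n) (x n) (v n))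
    (fun n => hαdef n ▸ Real.sqrt_nonneg _) hlam hstep k
  simpa only [hnagLyapunov, mul_sum, mul_left_comm (1 / (4 * L))] using hunrolled

/-- Convergence with subgradient control for the splitting HNAG scheme with the
alternative parameters `α_k = √(γ_k/(4L))`, `β_k = 1/(2Lα_k)` (Remark 5.1):
`L_k + (1/(4L))∑_{i<k} (λ_k/λ_i)‖q_{i+1}‖² ≤ λ_k L₀`, where
`q_{i+1} = ∇h(x_{i+1}) + p_{i+1}`. -/
theorem splitting_hnag_subgradient_control
    {V : Type*} [NormedAddCommGroup V] [InnerProductSpace ℝ V] [CompleteSpace V]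
    (μ L : ℝ) (hμ : 0 ≤ μ) (hL : 0 < L)
    (h g f : V → ℝ) (h' : V → V)
    (hconvh : ConvexOn ℝ Set.univ h)
    (hdiffh : ∀ z, HasGradientAt h (h' z) z)
    (hlip : ∀ z w : V, ‖h' z - h' w‖ ≤ L * ‖z - w‖)
    (hconvg : ConvexOn ℝ Set.univ g)
    (hf : ∀ z, f z = h z + g z)
    (hfconv : ∀ z w q : V, (∀ u, f u ≥ f w + ⟪q, u - w⟫) →
      f z - f w - ⟪q, z - w⟫ ≥ μ / 2 * ‖z - w‖ ^ 2)
    (xstar : V) (hmin : ∀ z, f xstar ≤ f z)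
    (x v p : ℕ → V) (γ α β lam : ℕ → ℝ) (hγ0 : 0 < γ 0)
    (hαdef : ∀ k, α k = Real.sqrt (γ k / (4 * L)))
    (hβ : ∀ k, β k = 1 / (2 * L * α k))
    (hp : ∀ k, ∀ u, g u ≥ g (x (k + 1)) + ⟪p (k + 1), u - x (k + 1)⟫)
    (h1 : ∀ k, (α k)⁻¹ • (x (k + 1) - x k)
        = v k - x (k + 1) - β k • (h' (x k) + p (k + 1)))
    (h2 : ∀ k, (α k)⁻¹ • (v (k + 1) - v k)
        = (μ / γ k) • (x (k + 1) - v (k + 1))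
          - (1 / γ k) • (h' (x (k + 1)) + p (k + 1)))
    (h3 : ∀ k, (γ (k + 1) - γ k) / α k = μ - γ (k + 1))
    (hlam : ∀ k, lam k = ∏ i ∈ Finset.range k, (1 + α i)⁻¹)
    (k : ℕ) :
    (f (x k) - f xstar + γ k / 2 * ‖v k - xstar‖ ^ 2)
        + 1 / (4 * L) * ∑ i ∈ Finset.range k,
            (lam k / lam i) * ‖h' (x (i + 1)) + p (i + 1)‖ ^ 2
      ≤ lam k * (f (x 0) - f xstar + γ 0 / 2 * ‖v 0 - xstar‖ ^ 2) :=
  splitting_hnag_subgradient_control_general μ L hμ hL h g f h' hconvh hdiffh hlip hf hfconv xstar x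
    v p γ α β lam hγ0 hαdef hβ hp h1 h2 h3 hlam k
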